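/- Let α ∈ (0,1], let k ≥ 1 be an integer, let c > 0, t > 0, and let x ∈ ℝ with |x| < ct. Then ∫_{-√(c²t²-x²)}^{√(c²t²-x²)} kα (c²t² - x² - y²)^{(αk-2)/2} / (2π (ct)^{αk}) dy = (c²t² - x²)^{(kα-1)/2} Γ(kα+1) / ((2ct)^{αk} Γ((kα+1)/2)²). -/

import Mathlib

/-!
With `p = αk` and `R = c²t² - x²`, the substitution `y = √R (2s - 1)` turns the integral into
`(2√R)^(p-1)` times the Beta integral `B(p/2, p/2) = Γ(p/2)² / Γ(p)`, and Legendre's duplication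
formula `Γ(p/2) Γ((p+1)/2) = 2^(1-p) √π Γ(p)` expresses `Γ(p/2)` through `Γ((p+1)/2)`.
-/

open Real MeasureTheory

theorem integral_rpow_mul_one_sub_rpow {u v : ℝ} (hu : 0 < u) (hv : 0 < v) :
    ∫ x in (0 : ℝ)..1, x ^ (u - 1) * (1 - x) ^ (v - 1) = Gamma u * Gamma v / Gamma (u + v) := by
  have hbeta : Complex.betaIntegral u v =
      ↑(∫ x in (0 : ℝ)..1, x ^ (u - 1) * (1 - x) ^ (v - 1)) := by
    rw [Complex.betaIntegral, ← intervalIntegral.integral_ofReal]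
    refine intervalIntegral.integral_congr fun x hx => ?_
    rw [Set.uIcc_of_le zero_le_one] at hx
    simp only [Complex.ofReal_mul, Complex.ofReal_cpow hx.1,
      Complex.ofReal_cpow (sub_nonneg.2 hx.2), Complex.ofReal_sub, Complex.ofReal_one]
  have key := Complex.betaIntegral_eq_Gamma_mul_div (u := u) (v := v) (by simpa) (by simpa)
  rw [hbeta, ← Complex.ofReal_add, Complex.Gamma_ofReal, Complex.Gamma_ofReal,
    Complex.Gamma_ofReal, ← Complex.ofReal_mul, ← Complex.ofReal_div, Complex.ofReal_inj] at key
  exact key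

theorem integral_sq_sub_sq_rpow {r p : ℝ} (hr : 0 < r) (hp : 0 < p) :
    ∫ y in (-r)..r, (r ^ 2 - y ^ 2) ^ ((p - 2) / 2) =
      (2 * r) ^ (p - 1) * Gamma (p / 2) ^ 2 / Gamma p := by
  have h2r : 0 < 2 * r := by linarith
  have hsub : ∫ y in (-r)..r, (r ^ 2 - y ^ 2) ^ ((p - 2) / 2) =
      (2 * r) * ∫ x in (0 : ℝ)..1, (r ^ 2 - (2 * r * x + -r) ^ 2) ^ ((p - 2) / 2) := by
    have h := intervalIntegral.smul_integral_comp_mul_add (a := 0) (b := 1)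
      (fun y => (r ^ 2 - y ^ 2) ^ ((p - 2) / 2)) (2 * r) (-r)
    simp only [smul_eq_mul, mul_zero, mul_one, zero_add] at h
    rw [h, show 2 * r + -r = r by ring]
  have hintegrand : ∀ x ∈ Set.uIcc (0 : ℝ) 1, (r ^ 2 - (2 * r * x + -r) ^ 2) ^ ((p - 2) / 2) =
      (2 * r) ^ (p - 2) * (x ^ (p / 2 - 1) * (1 - x) ^ (p / 2 - 1)) := by
    intro x hx
    rw [Set.uIcc_of_le zero_le_one] at hx
    rw [show r ^ 2 - (2 * r * x + -r) ^ 2 = (2 * r) ^ (2 : ℝ) * (x * (1 - x)) by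
        rw [rpow_two]; ring,
      mul_rpow (by positivity) (mul_nonneg hx.1 (sub_nonneg.2 hx.2)),
      mul_rpow hx.1 (sub_nonneg.2 hx.2), ← rpow_mul h2r.le]
    congr 2 <;> ring_nf
  rw [hsub, intervalIntegral.integral_congr hintegrand, intervalIntegral.integral_const_mul,
    integral_rpow_mul_one_sub_rpow (half_pos hp) (half_pos hp), add_halves,
    show p - 1 = p - 2 + 1 by ring, rpow_add_one h2r.ne']
  ring

theorem Gamma_half_sq_div_Gamma {p : ℝ} (hp : 0 < p) :
    Gamma (p / 2) ^ 2 / Gamma p = 4 * π * Gamma p / ((2 : ℝ) ^ p * Gamma ((p + 1) / 2)) ^ 2 := by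
  have hdup := Gamma_mul_Gamma_add_half (p / 2)
  rw [show p / 2 + 1 / 2 = (p + 1) / 2 by ring, mul_div_cancel₀ p two_ne_zero,
    rpow_sub two_pos, rpow_one] at hdup
  have hG : 0 < Gamma p := Gamma_pos_of_pos hp
  have hG' : 0 < Gamma ((p + 1) / 2) := Gamma_pos_of_pos (by linarith)
  have h2p : 0 < (2 : ℝ) ^ p := rpow_pos_of_pos two_pos p
  rw [div_eq_div_iff hG.ne' (by positivity), ← mul_pow, mul_comm (_ ^ p), ← mul_assoc, hdup]
  field_simp
  rw [sq_sqrt pi_pos.le]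
  ring

theorem integral_sub_sq_rpow {R p : ℝ} (hR : 0 < R) (hp : 0 < p) :
    ∫ y in (-√R)..√R, (R - y ^ 2) ^ ((p - 2) / 2) =
      2 * π * R ^ ((p - 1) / 2) * Gamma p / (2 ^ p * Gamma ((p + 1) / 2) ^ 2) := by
  have h := integral_sq_sub_sq_rpow (sqrt_pos.2 hR) hp
  rw [sq_sqrt hR.le] at h
  rw [h, mul_div_assoc, Gamma_half_sq_div_Gamma hp, rpow_div_two_eq_sqrt _ hR.le,
    mul_rpow two_pos.le (sqrt_nonneg R), rpow_sub_one two_ne_zero]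
  have h2p : 0 < (2 : ℝ) ^ p := rpow_pos_of_pos two_pos p
  have hG' : 0 < Gamma ((p + 1) / 2) := Gamma_pos_of_pos (by linarith)
  field_simp
  ring

theorem stmt14_general (a : ℝ) (ha : 0 < a ∧ a ≤ 1) (k : ℕ) (hk : 1 ≤ k) (c t x : ℝ)
    (hx : |x| < c * t) :
    (∫ y in (-(Real.sqrt (c ^ 2 * t ^ 2 - x ^ 2)))..(Real.sqrt (c ^ 2 * t ^ 2 - x ^ 2)),
        (k : ℝ) * a * (c ^ 2 * t ^ 2 - x ^ 2 - y ^ 2) ^ ((a * (k : ℝ) - 2) / 2) /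
          (2 * π * (c * t) ^ (a * (k : ℝ))))
      = (c ^ 2 * t ^ 2 - x ^ 2) ^ (((k : ℝ) * a - 1) / 2) * Real.Gamma ((k : ℝ) * a + 1) /
          ((2 * c * t) ^ (a * (k : ℝ)) * Real.Gamma (((k : ℝ) * a + 1) / 2) ^ 2) := by
  have hct : 0 < c * t := (abs_nonneg x).trans_lt hx
  have hR : 0 < c ^ 2 * t ^ 2 - x ^ 2 := by nlinarith [sq_abs x, abs_nonneg x]
  have hp : 0 < a * k := mul_pos ha.1 (by exact_mod_cast hk)
  rw [intervalIntegral.integral_div, intervalIntegral.integral_const_mul,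
    integral_sub_sq_rpow hR hp, mul_comm (k : ℝ) a, Gamma_add_one hp.ne', mul_assoc 2 c,
    mul_rpow two_pos.le hct.le]
  have h2p : 0 < (2 : ℝ) ^ (a * k) := rpow_pos_of_pos two_pos _
  have hctp : 0 < (c * t) ^ (a * k) := rpow_pos_of_pos hct _
  have hG' : 0 < Gamma ((a * k + 1) / 2) := Gamma_pos_of_pos (by linarith)
  field_simp

theorem stmt14 (a : ℝ) (ha : 0 < a ∧ a ≤ 1) (k : ℕ) (hk : 1 ≤ k) (c t x : ℝ)
    (hc : 0 < c) (ht : 0 < t) (hx : |x| < c * t) :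
    (∫ y in (-(Real.sqrt (c ^ 2 * t ^ 2 - x ^ 2)))..(Real.sqrt (c ^ 2 * t ^ 2 - x ^ 2)),
        (k : ℝ) * a * (c ^ 2 * t ^ 2 - x ^ 2 - y ^ 2) ^ ((a * (k : ℝ) - 2) / 2) /
          (2 * π * (c * t) ^ (a * (k : ℝ))))
      = (c ^ 2 * t ^ 2 - x ^ 2) ^ (((k : ℝ) * a - 1) / 2) * Real.Gamma ((k : ℝ) * a + 1) /
          ((2 * c * t) ^ (a * (k : ℝ)) * Real.Gamma (((k : ℝ) * a + 1) / 2) ^ 2) :=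
  stmt14_general a ha k hk c t x hx
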